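/- Uniform convergence: Let H be a nonempty set of measurable NE approximators, D a probability measure on U, and ε, δ ∈ (0,1). Suppose C is a nonempty finite set of measurable NE approximators of cardinality K that (ε/6)-covers H, and assume the set {S ∈ U^m : ∃h ∈ H, |L_S(h) − L_D(h)| > ε} is measurable with respect to D^m. If m ≥ (9 / (2·ε²)) · (ln(2/δ) + ln K), then with probability at least 1 − δ over the draw of an i.i.d. sample S ∼ D^m, every h ∈ H satisfies |L_S(h) − L_D(h)| ≤ ε. -/

import Mathlib

open Finset MeasureTheory

section NashDefs

variable {N : Type*} {A : N → Type*}

/-- `σ` is a mixed strategy profile: each `σ i` is a probability distribution on `A i`. -/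
def IsMixedProfile [∀ i, Fintype (A i)] (σ : ∀ i, A i → ℝ) : Prop :=
  (∀ i a, 0 ≤ σ i a) ∧ ∀ i, ∑ a, σ i a = 1

/-- Expected utility of player `i` when the mixed strategy profile `σ` is played:
`u_i(σ) = ∑_{a ∈ A} (∏_j σ_j(a_j)) u_i(a)`. -/
def expUtil [Fintype N] [DecidableEq N] [∀ i, Fintype (A i)]
    (u : N → (∀ j, A j) → ℝ) (i : N) (σ : ∀ j, A j → ℝ) : ℝ :=
  ∑ a : ∀ j, A j, (∏ j, σ j (a j)) * u i a

/-- The pure strategy of player `i` playing action `b` with probability one. -/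
def pureStrat [∀ i, DecidableEq (A i)] {i : N} (b : A i) : A i → ℝ :=
  fun c => if c = b then 1 else 0

/-- Nash approximation loss:
`NashApr(σ, u) = max_{i ∈ N} max_{b ∈ A_i} [u_i(b, σ_{-i}) - u_i(σ)]`. -/
noncomputable def nashApr [Fintype N] [DecidableEq N] [Nonempty N]
    [∀ i, Fintype (A i)] [∀ i, DecidableEq (A i)] [∀ i, Nonempty (A i)]
    (σ : ∀ i, A i → ℝ) (u : N → (∀ j, A j) → ℝ) : ℝ :=
  Finset.univ.sup' Finset.univ_nonempty fun i : N =>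
    Finset.univ.sup' Finset.univ_nonempty fun b : A i =>
      expUtil u i (Function.update σ i (pureStrat b)) - expUtil u i σ

/-- ℓ1-distance between mixed strategy profiles:
`‖σ - σ'‖₁ = ∑_{i ∈ N} ∑_{a_i ∈ A_i} |σ_i(a_i) - σ'_i(a_i)|`. -/
def dist1 [Fintype N] [∀ i, Fintype (A i)] (σ σ' : ∀ i, A i → ℝ) : ℝ :=
  ∑ i, ∑ a, |σ i a - σ' i a|

/-- ℓmax-distance between game utilities:
`‖u - v‖max = max_{i ∈ N} max_{a ∈ A} |u_i(a) - v_i(a)|`. -/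
noncomputable def distMax [Fintype N] [DecidableEq N] [Nonempty N]
    [∀ i, Fintype (A i)] [∀ i, Nonempty (A i)]
    (u v : N → (∀ j, A j) → ℝ) : ℝ :=
  Finset.univ.sup' Finset.univ_nonempty fun i : N =>
    Finset.univ.sup' Finset.univ_nonempty fun a : ∀ j, A j => |u i a - v i a|

end NashDefs

/-- The set of all game utilities (with values in `[0,1]`) for fixed players `N`
and action space `A`, as a subtype. -/
abbrev GameUtil (N : Type*) (A : N → Type*) : Type _ :=
  {u : N → (∀ j, A j) → ℝ // ∀ i a, u i a ∈ Set.Icc (0 : ℝ) 1}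

/-- An NE approximator maps game utilities to mixed strategy profiles. -/
abbrev NEApprox (N : Type*) (A : N → Type*) [∀ i, Fintype (A i)] : Type _ :=
  {h : GameUtil N A → ∀ i, A i → ℝ // ∀ u, IsMixedProfile (h u)}

section Risk

variable {N : Type*} {A : N → Type*} [Fintype N] [DecidableEq N] [Nonempty N]
  [∀ i, Fintype (A i)] [∀ i, DecidableEq (A i)] [∀ i, Nonempty (A i)]

/-- Nash approximation loss of an NE approximator on a game. -/
noncomputable def nashLoss (h : NEApprox N A) (u : GameUtil N A) : ℝ :=
  nashApr (h.1 u) u.1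

/-- True risk `L_D(h) = E_{u ∼ D}[NashApr(h(u), u)]`. -/
noncomputable def trueRisk (D : Measure (GameUtil N A)) (h : NEApprox N A) : ℝ :=
  ∫ u, nashLoss h u ∂D

/-- Empirical risk `L_S(h) = (1/m) ∑_j NashApr(h(u⁽ʲ⁾), u⁽ʲ⁾)`. -/
noncomputable def empRisk {m : ℕ} (S : Fin m → GameUtil N A) (h : NEApprox N A) : ℝ :=
  (1 / (m : ℝ)) * ∑ j, nashLoss h (S j)

/-- `C` `r`-covers `H` under the `ℓ_{∞,1}`-distance:
every `h ∈ H` is within `ℓ_{∞,1}`-distance `r` of some `g ∈ C`. -/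
def Covers (r : ℝ) (C : Finset (NEApprox N A)) (H : Set (NEApprox N A)) : Prop :=
  ∀ h ∈ H, ∃ g ∈ C, ∀ u, dist1 (h.1 u) (g.1 u) ≤ r

end Risk


/-! The Nash approximation loss takes values in `[-1, 1]` and is `1`-Lipschitz in the strategy
profile for the `ℓ1`-distance: centring the utilities at `1/2` bounds the change of an expected
utility by half the `ℓ1`-distance of the product distributions, which a hybrid argument (changing
one player's strategy at a time) bounds by half the `ℓ1`-distance of the profiles. Hence an
`ε/6`-cover moves empirical and true risks by at most `ε/6` each, so a deviation `ε` of some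
`h ∈ H` forces a deviation `2ε/3` of some `g ∈ C`. Hoeffding's inequality bounds each of these
`K` events by `2 exp (-2 m ε² / 9)`, and the union bound with the assumed `m` gives `δ`. -/

open Real ProbabilityTheory

section Hoeffding

variable {α : Type*} [MeasurableSpace α] {D : Measure α} [IsProbabilityMeasure D] {f : α → ℝ}
  {a b : ℝ}

theorem measureReal_le_sum_sub_integral_le (hf : Measurable f)
    (hab : ∀ x, f x ∈ Set.Icc a b) (m : ℕ) {t : ℝ} (ht : 0 ≤ t) :
    (Measure.pi fun _ : Fin m => D).real {S | t ≤ ∑ j, (f (S j) - ∫ x, f x ∂D)}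
      ≤ exp (-2 * t ^ 2 / (m * (b - a) ^ 2)) := by
  have h_indep : iIndepFun (fun j (S : Fin m → α) => f (S j) - ∫ x, f x ∂D)
      (Measure.pi fun _ => D) :=
    iIndepFun_pi (X := fun _ x => f x - ∫ x, f x ∂D) fun _ => (hf.sub_const _).aemeasurable
  have h_subG : ∀ j ∈ univ, HasSubgaussianMGF (fun S : Fin m → α => f (S j) - ∫ x, f x ∂D)
      ((‖b - a‖₊ / 2) ^ 2) (Measure.pi fun _ => D) := by
    intro j _
    have := hasSubgaussianMGF_of_mem_Icc (μ := Measure.pi fun _ : Fin m => D)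
      (X := fun S => f (S j)) (hf.comp (measurable_pi_apply j)).aemeasurable
      (ae_of_all _ fun S => hab (S j))
    rwa [integral_comp_eval hf.aestronglyMeasurable] at this
  refine (HasSubgaussianMGF.measure_sum_ge_le_of_iIndepFun h_indep h_subG ht).trans_eq ?_
  simp only [sum_const, card_univ, Fintype.card_fin, nsmul_eq_mul]
  push_cast
  rw [Real.norm_eq_abs, div_pow, sq_abs,
    show 2 * (m * ((b - a) ^ 2 / 2 ^ 2)) = m * (b - a) ^ 2 / 2 by ring, div_div_eq_mul_div]
  congr 2
  ring

theorem measureReal_le_abs_sum_sub_integral_le (hf : Measurable f)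
    (hab : ∀ x, f x ∈ Set.Icc a b) (m : ℕ) {t : ℝ} (ht : 0 ≤ t) :
    (Measure.pi fun _ : Fin m => D).real {S | t ≤ |∑ j, (f (S j) - ∫ x, f x ∂D)|}
      ≤ 2 * exp (-2 * t ^ 2 / (m * (b - a) ^ 2)) := by
  have h_upper := measureReal_le_sum_sub_integral_le (D := D) hf hab m ht
  have h_lower := measureReal_le_sum_sub_integral_le (D := D) hf.neg
    (fun x => ⟨neg_le_neg (hab x).2, neg_le_neg (hab x).1⟩) m ht
  rw [show -a - -b = b - a by ring] at h_lower
  simp only [Pi.neg_apply] at h_lower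
  have hsub : {S : Fin m → α | t ≤ |∑ j, (f (S j) - ∫ x, f x ∂D)|}
      ⊆ {S | t ≤ ∑ j, (f (S j) - ∫ x, f x ∂D)} ∪ {S | t ≤ ∑ j, (-f (S j) - ∫ x, -f x ∂D)} := by
    intro S hS
    have hneg : ∑ j, (-f (S j) - ∫ x, -f x ∂D) = -∑ j, (f (S j) - ∫ x, f x ∂D) := by
      rw [integral_neg, ← sum_neg_distrib]
      exact sum_congr rfl fun j _ => by abel
    rw [Set.mem_union, Set.mem_ofPred_eq, Set.mem_ofPred_eq, hneg]
    exact le_abs.1 hS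
  calc _ ≤ _ := measureReal_mono hsub
    _ ≤ _ := measureReal_union_le _ _
    _ ≤ _ := add_le_add h_upper h_lower
    _ = _ := (two_mul _).symm

theorem measureReal_le_abs_mean_sub_integral_le (hf : Measurable f)
    (hab : ∀ x, f x ∈ Set.Icc a b) (m : ℕ) {t : ℝ} (ht : 0 ≤ t) :
    (Measure.pi fun _ : Fin m => D).real {S | t ≤ |1 / m * ∑ j, f (S j) - ∫ x, f x ∂D|}
      ≤ 2 * exp (-2 * m * t ^ 2 / (b - a) ^ 2) := by
  rcases m.eq_zero_or_pos with rfl | hm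
  · calc _ ≤ 1 := measureReal_le_one
      _ ≤ _ := by norm_num
  have hm' : (0 : ℝ) < m := by exact_mod_cast hm
  have hset : {S : Fin m → α | t ≤ |1 / m * ∑ j, f (S j) - ∫ x, f x ∂D|}
      = {S | m * t ≤ |∑ j, (f (S j) - ∫ x, f x ∂D)|} := by
    ext S
    rw [Set.mem_ofPred_eq, Set.mem_ofPred_eq, sum_sub_distrib, sum_const, card_univ,
      Fintype.card_fin, nsmul_eq_mul,
      show ∑ j, f (S j) - m * ∫ x, f x ∂D = m * (1 / m * ∑ j, f (S j) - ∫ x, f x ∂D) by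
        rw [mul_sub, ← mul_assoc, mul_one_div_cancel hm'.ne', one_mul],
      abs_mul, abs_of_pos hm', mul_le_mul_iff_right₀ hm']
  rw [hset]
  refine (measureReal_le_abs_sum_sub_integral_le (D := D) hf hab m (by positivity)).trans_eq ?_
  congr 2
  field_simp

end Hoeffding

section MixedProfile

variable {N : Type*} {A : N → Type*}

theorem dist1_comm [Fintype N] [∀ i, Fintype (A i)] (σ σ' : ∀ i, A i → ℝ) :
    dist1 σ σ' = dist1 σ' σ := by
  simp only [dist1, abs_sub_comm]

theorem IsMixedProfile.update [DecidableEq N] [∀ i, Fintype (A i)] {σ : ∀ i, A i → ℝ}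
    (hσ : IsMixedProfile σ) {i : N} {ρ : A i → ℝ} (hρ₀ : ∀ x, 0 ≤ ρ x) (hρ₁ : ∑ x, ρ x = 1) :
    IsMixedProfile (Function.update σ i ρ) :=
  ⟨(Function.forall_update_iff σ fun _ τ => ∀ x, 0 ≤ τ x).2 ⟨hρ₀, fun j _ => hσ.1 j⟩,
    (Function.forall_update_iff σ fun _ τ => ∑ x, τ x = 1).2 ⟨hρ₁, fun j _ => hσ.2 j⟩⟩

theorem IsMixedProfile.piecewise [DecidableEq N] [∀ i, Fintype (A i)] {σ σ' : ∀ i, A i → ℝ}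
    (hσ : IsMixedProfile σ) (hσ' : IsMixedProfile σ') (s : Finset N) :
    IsMixedProfile (s.piecewise σ σ') :=
  ⟨fun j => by by_cases hj : j ∈ s <;> simp [hj, hσ.1 j, hσ'.1 j],
    fun j => by by_cases hj : j ∈ s <;> simp [hj, hσ.2 j, hσ'.2 j]⟩

theorem pureStrat_nonneg [∀ i, DecidableEq (A i)] {i : N} (b c : A i) :
    0 ≤ pureStrat b c := by
  unfold pureStrat
  split_ifs <;> norm_num

theorem sum_pureStrat [∀ i, DecidableEq (A i)] [∀ i, Fintype (A i)] {i : N} (b : A i) :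
    ∑ c, pureStrat b c = 1 := by
  simp [pureStrat]

theorem IsMixedProfile.update_pureStrat [DecidableEq N] [∀ i, DecidableEq (A i)]
    [∀ i, Fintype (A i)] {σ : ∀ i, A i → ℝ} (hσ : IsMixedProfile σ) (i : N)
    (b : A i) : IsMixedProfile (Function.update σ i (pureStrat b)) :=
  hσ.update (pureStrat_nonneg b) (sum_pureStrat b)

theorem prod_update_apply [Fintype N] [DecidableEq N] (τ : ∀ i, A i → ℝ) (i : N)
    (ρ : A i → ℝ) (a : ∀ j, A j) :
    ∏ j, Function.update τ i ρ j (a j) = ρ (a i) * ∏ j ∈ univ.erase i, τ j (a j) := by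
  rw [← mul_prod_erase univ _ (mem_univ i), Function.update_self]
  congr 1
  exact prod_congr rfl fun j hj => by rw [Function.update_of_ne (ne_of_mem_erase hj)]

variable [Fintype N] [DecidableEq N] [∀ i, Fintype (A i)]

theorem sum_prod_update {τ : ∀ i, A i → ℝ} {i : N} (hτ : ∀ j ≠ i, ∑ x, τ j x = 1)
    (ρ : A i → ℝ) : ∑ a : ∀ j, A j, ∏ j, Function.update τ i ρ j (a j) = ∑ x, ρ x := by
  rw [← Fintype.prod_sum, Fintype.prod_eq_single i fun j hj => by
    rw [Function.update_of_ne hj, hτ j hj], Function.update_self]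

theorem IsMixedProfile.sum_prod_eq_one {σ : ∀ i, A i → ℝ} (hσ : IsMixedProfile σ) :
    ∑ a : ∀ j, A j, ∏ j, σ j (a j) = 1 := by
  simp [← Fintype.prod_sum, hσ.2]

theorem sum_abs_prod_update_sub_prod {τ : ∀ i, A i → ℝ} (hτ : IsMixedProfile τ) (i : N)
    (ρ : A i → ℝ) :
    ∑ a : ∀ j, A j, |∏ j, Function.update τ i ρ j (a j) - ∏ j, τ j (a j)|
      = ∑ x, |ρ x - τ i x| := by
  have hpoint : ∀ a : ∀ j, A j, |∏ j, Function.update τ i ρ j (a j) - ∏ j, τ j (a j)|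
      = ∏ j, Function.update τ i (fun x => |ρ x - τ i x|) j (a j) := by
    intro a
    rw [prod_update_apply, prod_update_apply, ← mul_prod_erase univ _ (mem_univ i), ← sub_mul,
      abs_mul, abs_of_nonneg (prod_nonneg fun j _ => hτ.1 j _)]
  rw [sum_congr rfl fun a _ => hpoint a, sum_prod_update fun j _ => hτ.2 j]

theorem sum_abs_prod_sub_prod_le {σ σ' : ∀ i, A i → ℝ} (hσ : IsMixedProfile σ)
    (hσ' : IsMixedProfile σ') :
    ∑ a : ∀ j, A j, |∏ j, σ j (a j) - ∏ j, σ' j (a j)| ≤ dist1 σ σ' := by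
  suffices ∀ s : Finset N, ∑ a : ∀ j, A j, |∏ j, s.piecewise σ σ' j (a j) - ∏ j, σ' j (a j)|
      ≤ ∑ i ∈ s, ∑ x, |σ i x - σ' i x| by simpa [dist1] using this univ
  intro s
  induction s using Finset.induction_on with
  | empty => simp
  | insert i s hi ih =>
    set τ := s.piecewise σ σ'
    rw [piecewise_insert, sum_insert hi]
    calc ∑ a : ∀ j, A j, |∏ j, Function.update τ i (σ i) j (a j) - ∏ j, σ' j (a j)|
        ≤ ∑ a : ∀ j, A j, (|∏ j, Function.update τ i (σ i) j (a j) - ∏ j, τ j (a j)|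
            + |∏ j, τ j (a j) - ∏ j, σ' j (a j)|) :=
          sum_le_sum fun a _ => abs_sub_le _ _ _
      _ = ∑ x, |σ i x - σ' i x| + ∑ a : ∀ j, A j, |∏ j, τ j (a j) - ∏ j, σ' j (a j)| := by
          rw [sum_add_distrib, sum_abs_prod_update_sub_prod (hσ.piecewise hσ' s),
            piecewise_eq_of_notMem _ _ _ hi]
      _ ≤ _ := by gcongr

theorem dist1_update_le (σ σ' : ∀ i, A i → ℝ) (i : N) (ρ : A i → ℝ) :
    dist1 (Function.update σ i ρ) (Function.update σ' i ρ) ≤ dist1 σ σ' := by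
  refine sum_le_sum fun j _ => ?_
  rcases eq_or_ne j i with rfl | hj
  · simp only [Function.update_self, sub_self, abs_zero, sum_const_zero]
    positivity
  · simp only [Function.update_of_ne hj, le_refl]

theorem expUtil_mem_Icc {u : N → (∀ j, A j) → ℝ} {i : N} (hu : ∀ a, u i a ∈ Set.Icc (0 : ℝ) 1)
    {σ : ∀ i, A i → ℝ} (hσ : IsMixedProfile σ) : expUtil u i σ ∈ Set.Icc (0 : ℝ) 1 :=
  ⟨sum_nonneg fun a _ => mul_nonneg (prod_nonneg fun j _ => hσ.1 j _) (hu a).1,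
    (sum_le_sum fun a _ => mul_le_of_le_one_right (prod_nonneg fun j _ => hσ.1 j _) (hu a).2).trans
      hσ.sum_prod_eq_one.le⟩

theorem abs_expUtil_sub_le {u : N → (∀ j, A j) → ℝ} {i : N}
    (hu : ∀ a, u i a ∈ Set.Icc (0 : ℝ) 1) {σ σ' : ∀ i, A i → ℝ} (hσ : IsMixedProfile σ)
    (hσ' : IsMixedProfile σ') : |expUtil u i σ - expUtil u i σ'| ≤ dist1 σ σ' / 2 := by
  -- centring `u` at `1/2` is free because both product distributions have total mass one
  have hcentred : expUtil u i σ - expUtil u i σ'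
      = ∑ a : ∀ j, A j, (∏ j, σ j (a j) - ∏ j, σ' j (a j)) * (u i a - 1 / 2) := by
    simp only [expUtil, sub_mul, mul_sub, sum_sub_distrib, ← sum_mul, hσ.sum_prod_eq_one,
      hσ'.sum_prod_eq_one]
    ring
  calc |expUtil u i σ - expUtil u i σ'|
      ≤ ∑ a : ∀ j, A j, |∏ j, σ j (a j) - ∏ j, σ' j (a j)| * (1 / 2) := by
        rw [hcentred]
        refine (abs_sum_le_sum_abs _ _).trans (sum_le_sum fun a _ => ?_)
        rw [abs_mul]
        exact mul_le_mul_of_nonneg_left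
          (abs_le.2 ⟨by linarith [(hu a).1], by linarith [(hu a).2]⟩) (abs_nonneg _)
    _ ≤ dist1 σ σ' / 2 := by
        rw [← sum_mul]
        linarith [sum_abs_prod_sub_prod_le hσ hσ']

end MixedProfile

section NashApproximation

variable {N : Type*} {A : N → Type*} [Fintype N] [DecidableEq N] [Nonempty N]
  [∀ i, Fintype (A i)] [∀ i, DecidableEq (A i)] [∀ i, Nonempty (A i)]

theorem nashApr_mem_Icc {u : N → (∀ j, A j) → ℝ} (hu : ∀ i a, u i a ∈ Set.Icc (0 : ℝ) 1)
    {σ : ∀ i, A i → ℝ} (hσ : IsMixedProfile σ) : nashApr σ u ∈ Set.Icc (-1 : ℝ) 1 := by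
  have hgain : ∀ i (b : A i),
      expUtil u i (Function.update σ i (pureStrat b)) - expUtil u i σ ∈ Set.Icc (-1 : ℝ) 1 := by
    intro i b
    have h₁ := expUtil_mem_Icc (hu i) (hσ.update_pureStrat i b)
    have h₂ := expUtil_mem_Icc (hu i) hσ
    constructor <;> linarith [h₁.1, h₁.2, h₂.1, h₂.2]
  obtain ⟨i⟩ := ‹Nonempty N›
  obtain ⟨b⟩ : Nonempty (A i) := inferInstance
  exact ⟨le_sup'_of_le _ (mem_univ i) (le_sup'_of_le _ (mem_univ b) (hgain i b).1),
    sup'_le _ _ fun i _ => sup'_le _ _ fun b _ => (hgain i b).2⟩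

theorem nashApr_le_add_dist1 {u : N → (∀ j, A j) → ℝ} (hu : ∀ i a, u i a ∈ Set.Icc (0 : ℝ) 1)
    {σ σ' : ∀ i, A i → ℝ} (hσ : IsMixedProfile σ) (hσ' : IsMixedProfile σ') :
    nashApr σ u ≤ nashApr σ' u + dist1 σ σ' := by
  refine sup'_le _ _ fun i _ => sup'_le _ _ fun b _ => ?_
  have hdev := abs_le.1 <| abs_expUtil_sub_le (hu i) (hσ.update_pureStrat i b)
    (hσ'.update_pureStrat i b)
  have hstay := abs_le.1 <| abs_expUtil_sub_le (hu i) hσ hσ'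
  have hupdate := dist1_update_le σ σ' i (pureStrat b)
  have hgain : expUtil u i (Function.update σ' i (pureStrat b)) - expUtil u i σ'
      ≤ nashApr σ' u :=
    le_sup'_of_le _ (mem_univ i) (le_sup'_of_le _ (mem_univ b) le_rfl)
  linarith [hdev.2, hstay.1]

theorem abs_nashApr_sub_le {u : N → (∀ j, A j) → ℝ} (hu : ∀ i a, u i a ∈ Set.Icc (0 : ℝ) 1)
    {σ σ' : ∀ i, A i → ℝ} (hσ : IsMixedProfile σ) (hσ' : IsMixedProfile σ') :
    |nashApr σ u - nashApr σ' u| ≤ dist1 σ σ' :=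
  abs_sub_le_iff.2 ⟨by linarith [nashApr_le_add_dist1 hu hσ hσ'],
    by linarith [nashApr_le_add_dist1 hu hσ' hσ, dist1_comm σ σ']⟩

end NashApproximation

section Risk

variable {N : Type*} {A : N → Type*} [Fintype N] [DecidableEq N] [Nonempty N]
  [∀ i, Fintype (A i)] [∀ i, DecidableEq (A i)] [∀ i, Nonempty (A i)]

theorem nashLoss_mem_Icc (h : NEApprox N A) (u : GameUtil N A) :
    nashLoss h u ∈ Set.Icc (-1 : ℝ) 1 :=
  nashApr_mem_Icc u.2 (h.2 u)

theorem abs_nashLoss_sub_le (h g : NEApprox N A) (u : GameUtil N A) :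
    |nashLoss h u - nashLoss g u| ≤ dist1 (h.1 u) (g.1 u) :=
  abs_nashApr_sub_le u.2 (h.2 u) (g.2 u)

theorem abs_empRisk_sub_le {m : ℕ} (S : Fin m → GameUtil N A) {h g : NEApprox N A} {r : ℝ}
    (hr : 0 ≤ r) (hd : ∀ u, dist1 (h.1 u) (g.1 u) ≤ r) :
    |empRisk S h - empRisk S g| ≤ r := by
  rcases m.eq_zero_or_pos with rfl | hm
  · simpa [empRisk] using hr
  have hm' : (0 : ℝ) < m := by exact_mod_cast hm
  rw [empRisk, empRisk, ← mul_sub, ← sum_sub_distrib, abs_mul, abs_of_pos (by positivity),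
    one_div_mul_eq_div, div_le_iff₀' hm']
  calc |∑ j, (nashLoss h (S j) - nashLoss g (S j))|
      ≤ ∑ j, |nashLoss h (S j) - nashLoss g (S j)| := abs_sum_le_sum_abs _ _
    _ ≤ ∑ _j : Fin m, r := sum_le_sum fun j _ => (abs_nashLoss_sub_le h g (S j)).trans (hd _)
    _ = m * r := by simp

theorem abs_trueRisk_sub_le (D : Measure (GameUtil N A)) [IsProbabilityMeasure D]
    {h g : NEApprox N A} (hh : Measurable (nashLoss h)) (hg : Measurable (nashLoss g)) {r : ℝ}
    (hd : ∀ u, dist1 (h.1 u) (g.1 u) ≤ r) :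
    |trueRisk D h - trueRisk D g| ≤ r := by
  rw [trueRisk, trueRisk, ← integral_sub
    (Integrable.of_mem_Icc _ _ hh.aemeasurable (ae_of_all _ (nashLoss_mem_Icc h)))
    (Integrable.of_mem_Icc _ _ hg.aemeasurable (ae_of_all _ (nashLoss_mem_Icc g)))]
  simpa using norm_integral_le_of_norm_le_const (μ := D)
    (f := fun u => nashLoss h u - nashLoss g u)
    (ae_of_all _ fun u => (abs_nashLoss_sub_le h g u).trans (hd u))

theorem abs_empRisk_sub_trueRisk_le_add (D : Measure (GameUtil N A)) [IsProbabilityMeasure D]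
    {m : ℕ} (S : Fin m → GameUtil N A) {h g : NEApprox N A} (hh : Measurable (nashLoss h))
    (hg : Measurable (nashLoss g)) {r : ℝ} (hr : 0 ≤ r) (hd : ∀ u, dist1 (h.1 u) (g.1 u) ≤ r) :
    |empRisk S h - trueRisk D h| ≤ |empRisk S g - trueRisk D g| + 2 * r := by
  obtain ⟨hemp₁, hemp₂⟩ := abs_le.1 (abs_empRisk_sub_le S hr hd)
  obtain ⟨htrue₁, htrue₂⟩ := abs_le.1 (abs_trueRisk_sub_le D hh hg hd)
  rw [abs_le]
  constructor <;> linarith [le_abs_self (empRisk S g - trueRisk D g),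
    neg_abs_le (empRisk S g - trueRisk D g)]

theorem measureReal_le_abs_empRisk_sub_trueRisk_le (D : Measure (GameUtil N A))
    [IsProbabilityMeasure D] {g : NEApprox N A} (hg : Measurable (nashLoss g)) (m : ℕ) {t : ℝ}
    (ht : 0 ≤ t) :
    (Measure.pi fun _ : Fin m => D).real {S | t ≤ |empRisk S g - trueRisk D g|}
      ≤ 2 * exp (-(m * t ^ 2 / 2)) := by
  refine (measureReal_le_abs_mean_sub_integral_le hg (nashLoss_mem_Icc g) m ht).trans_eq ?_
  congr 2
  ring

theorem measureReal_exists_abs_empRisk_sub_trueRisk_gt_le (D : Measure (GameUtil N A))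
    [IsProbabilityMeasure D] {H : Set (NEApprox N A)} {C : Finset (NEApprox N A)} {r ε : ℝ}
    (hr : 0 ≤ r) (hrε : 2 * r ≤ ε) (hHmeas : ∀ h ∈ H, Measurable (nashLoss h))
    (hCmeas : ∀ g ∈ C, Measurable (nashLoss g)) (hcover : Covers r C H) (m : ℕ) :
    (Measure.pi fun _ : Fin m => D).real
        {S | ∃ h ∈ H, |empRisk S h - trueRisk D h| > ε}
      ≤ C.card * (2 * exp (-(m * (ε - 2 * r) ^ 2 / 2))) := by
  have hsub : {S : Fin m → GameUtil N A | ∃ h ∈ H, |empRisk S h - trueRisk D h| > ε}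
      ⊆ ⋃ g ∈ C, {S | ε - 2 * r ≤ |empRisk S g - trueRisk D g|} := by
    rintro S ⟨h, hh, hε⟩
    obtain ⟨g, hg, hd⟩ := hcover h hh
    refine Set.mem_biUnion hg ?_
    have := abs_empRisk_sub_trueRisk_le_add D S (hHmeas h hh) (hCmeas g hg) hr hd
    change ε - 2 * r ≤ _
    linarith
  calc _ ≤ _ := measureReal_mono hsub (measure_ne_top _ _)
    _ ≤ _ := measureReal_biUnion_finset_le _ _
    _ ≤ ∑ _g ∈ C, 2 * exp (-(m * (ε - 2 * r) ^ 2 / 2)) := sum_le_sum fun g hg =>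
        measureReal_le_abs_empRisk_sub_trueRisk_le D (hCmeas g hg) m (by linarith)
    _ = _ := by rw [sum_const, nsmul_eq_mul]

end Risk

theorem mul_two_mul_exp_neg_le {K δ x : ℝ} (hK : 0 < K) (hδ : 0 < δ)
    (hx : log (2 / δ) + log K ≤ x) : K * (2 * exp (-x)) ≤ δ :=
  calc K * (2 * exp (-x)) ≤ K * (2 * exp (-(log (2 / δ) + log K))) := by gcongr
    _ = δ := by
      rw [← log_mul (by positivity) hK.ne', exp_neg, exp_log (by positivity)]
      field_simp

theorem uniform_convergence_general
    {N : Type*} [Fintype N] [DecidableEq N] [Nonempty N]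
    {A : N → Type*} [∀ i, Fintype (A i)] [∀ i, DecidableEq (A i)] [∀ i, Nonempty (A i)]
    (H : Set (NEApprox N A))
    (hHmeas : ∀ h ∈ H, Measurable (nashLoss h))
    (D : Measure (GameUtil N A)) [IsProbabilityMeasure D]
    (ε δ : ℝ) (hε : ε ∈ Set.Ioo (0 : ℝ) 1) (hδ : δ ∈ Set.Ioo (0 : ℝ) 1)
    (C : Finset (NEApprox N A)) (hC : C.Nonempty) (K : ℕ) (hK : C.card = K)
    (hCmeas : ∀ g ∈ C, Measurable (nashLoss g))
    (hcover : Covers (ε / 6) C H)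
    {m : ℕ}
    (hsetmeas : MeasurableSet
      {S : Fin m → GameUtil N A | ∃ h ∈ H, |empRisk S h - trueRisk D h| > ε})
    (hm : 9 / (2 * ε ^ 2) * (Real.log (2 / δ) + Real.log K) ≤ (m : ℝ)) :
    ENNReal.ofReal (1 - δ) ≤
      (MeasureTheory.Measure.pi fun _ : Fin m => D)
        {S : Fin m → GameUtil N A | ∀ h ∈ H, |empRisk S h - trueRisk D h| ≤ ε} := by
  obtain ⟨hε₀, -⟩ := hε
  obtain ⟨hδ₀, -⟩ := hδ
  have hK₀ : (0 : ℝ) < K := by exact_mod_cast hK ▸ hC.card_pos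
  have hx : log (2 / δ) + log K ≤ m * (ε - 2 * (ε / 6)) ^ 2 / 2 := by
    rw [← le_div_iff₀' (by positivity)] at hm
    exact hm.trans_eq (by field_simp; ring)
  have hbad := (measureReal_exists_abs_empRisk_sub_trueRisk_gt_le D (by positivity)
    (by linarith) hHmeas hCmeas hcover m).trans (hK ▸ mul_two_mul_exp_neg_le hK₀ hδ₀ hx)
  have hgood : {S : Fin m → GameUtil N A | ∀ h ∈ H, |empRisk S h - trueRisk D h| ≤ ε}
      = {S | ∃ h ∈ H, |empRisk S h - trueRisk D h| > ε}ᶜ := by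
    ext S
    simp
  rw [hgood]
  refine ENNReal.ofReal_le_of_le_toReal ?_
  rw [← measureReal_def, probReal_compl_eq_one_sub hsetmeas]
  linarith

theorem uniform_convergence
    {N : Type*} [Fintype N] [DecidableEq N] [Nonempty N]
    {A : N → Type*} [∀ i, Fintype (A i)] [∀ i, DecidableEq (A i)] [∀ i, Nonempty (A i)]
    (H : Set (NEApprox N A)) (hH : H.Nonempty)
    (hHmeas : ∀ h ∈ H, Measurable (nashLoss h))
    (D : Measure (GameUtil N A)) [IsProbabilityMeasure D]
    (ε δ : ℝ) (hε : ε ∈ Set.Ioo (0 : ℝ) 1) (hδ : δ ∈ Set.Ioo (0 : ℝ) 1)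
    (C : Finset (NEApprox N A)) (hC : C.Nonempty) (K : ℕ) (hK : C.card = K)
    (hCmeas : ∀ g ∈ C, Measurable (nashLoss g))
    (hcover : Covers (ε / 6) C H)
    {m : ℕ}
    (hsetmeas : MeasurableSet
      {S : Fin m → GameUtil N A | ∃ h ∈ H, |empRisk S h - trueRisk D h| > ε})
    (hm : 9 / (2 * ε ^ 2) * (Real.log (2 / δ) + Real.log K) ≤ (m : ℝ)) :
    ENNReal.ofReal (1 - δ) ≤
      (MeasureTheory.Measure.pi fun _ : Fin m => D)
        {S : Fin m → GameUtil N A | ∀ h ∈ H, |empRisk S h - trueRisk D h| ≤ ε} :=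
  uniform_convergence_general H hHmeas D ε δ hε hδ C hC K hK hCmeas hcover hsetmeas hm
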